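/- Let k ≥ 2 and let Γ be a connected k-regular bipartite graph on n = 2m vertices with eigenvalues λ₁ ≥ ⋯ ≥ λₙ. Then the energy per vertex of Γ is at most k/m + (1/m)√((m−1)(m−k)k). -/

import Mathlib

set_option linter.unusedSectionVars false
open Finset

section Defs
variable {V : Type*} [Fintype V] [DecidableEq V]

theorem adjMatrix_isHermitian (G : SimpleGraph V) [DecidableRel G.Adj] :
    (SimpleGraph.adjMatrix ℝ G).IsHermitian := by
  ext i j
  simp [Matrix.conjTranspose_apply, SimpleGraph.adjMatrix_apply, SimpleGraph.adj_comm]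

/-- The eigenvalues of the adjacency matrix of a graph. -/
noncomputable def adjEigs (G : SimpleGraph V) : V → ℝ := by
  classical exact (adjMatrix_isHermitian G).eigenvalues

/-- The spectrum of the graph, as a multiset of real eigenvalues. -/
noncomputable def adjSpectrum (G : SimpleGraph V) : Multiset ℝ :=
  Finset.univ.val.map (adjEigs G)

/-- The energy per vertex of a graph. -/
noncomputable def epv (G : SimpleGraph V) : ℝ :=
  (∑ i, |adjEigs G i|) / (Fintype.card V)

/-- The disjoint union of an indexed family of graphs. -/
def sigmaGraph {ι : Type*} {W : ι → Type*} (G : ∀ i, SimpleGraph (W i)) :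
    SimpleGraph (Σ i, W i) where
  Adj x y := ∃ (i : ι) (a b : W i), (G i).Adj a b ∧ x = ⟨i, a⟩ ∧ y = ⟨i, b⟩
  symm := by constructor; rintro x y ⟨i, a, b, h, rfl, rfl⟩; exact ⟨i, b, a, h.symm, rfl, rfl⟩
  loopless := by
    constructor
    rintro x ⟨i, a, b, h, rfl, h2⟩
    simp only [Sigma.mk.inj_iff, heq_eq_eq, true_and] at h2
    exact h.ne h2

/-- The bipartite incidence graph of a point-line geometry. -/
def incidenceGraph (P L : Type*) [Membership P L] : SimpleGraph (P ⊕ L) where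
  Adj x y := (∃ p l, p ∈ l ∧ x = Sum.inl p ∧ y = Sum.inr l) ∨
             (∃ p l, p ∈ l ∧ x = Sum.inr l ∧ y = Sum.inl p)
  symm := by
    constructor
    rintro x y (⟨p, l, h, rfl, rfl⟩ | ⟨p, l, h, rfl, rfl⟩)
    · exact Or.inr ⟨p, l, h, rfl, rfl⟩
    · exact Or.inl ⟨p, l, h, rfl, rfl⟩
  loopless := by constructor; rintro x (⟨p, l, h, rfl, h2⟩ | ⟨p, l, h, rfl, h2⟩) <;> simp at h2

/-- The bipartite double of a graph. -/
def bipartiteDouble (G : SimpleGraph V) : SimpleGraph (V ⊕ V) where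
  Adj x y := (∃ u v, G.Adj u v ∧ x = Sum.inl u ∧ y = Sum.inr v) ∨
             (∃ u v, G.Adj u v ∧ x = Sum.inr u ∧ y = Sum.inl v)
  symm := by
    constructor
    rintro x y (⟨u, v, h, rfl, rfl⟩ | ⟨u, v, h, rfl, rfl⟩)
    · exact Or.inr ⟨v, u, h.symm, rfl, rfl⟩
    · exact Or.inl ⟨v, u, h.symm, rfl, rfl⟩
  loopless := by constructor; rintro x (⟨u, v, h, rfl, h2⟩ | ⟨u, v, h, rfl, h2⟩) <;> simp at h2

end Defs

/-! The all-ones vector and the `±1` vector of a 2-colouring are eigenvectors of the adjacency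
matrix with eigenvalues `k` and `-k`, while the squares of all `2m` eigenvalues sum to
`tr A² = 2mk`. Cauchy–Schwarz bounds the absolute sum of the other `2m - 2` eigenvalues by
`√((2m - 2)(2mk - 2k²)) = 2√((m - 1)(m - k)k)`. -/

open Matrix

namespace Matrix.IsHermitian

variable {n : Type*} [Fintype n] [DecidableEq n] {A : Matrix n n ℝ} (hA : A.IsHermitian)
include hA

theorem exists_eigenvalues_eq {r : ℝ} {v : n → ℝ} (hv : v ≠ 0) (h : A *ᵥ v = r • v) :
    ∃ i, hA.eigenvalues i = r := by
  rw [← Set.mem_range, ← hA.spectrum_real_eq_range_eigenvalues, spectrum.mem_iff,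
    isUnit_iff_isUnit_det, isUnit_iff_ne_zero, not_not, ← exists_mulVec_eq_zero_iff]
  refine ⟨v, hv, ?_⟩
  rw [Algebra.algebraMap_eq_smul_one, sub_mulVec, smul_mulVec, one_mulVec, h, sub_self]

theorem sum_sq_eigenvalues : ∑ i, hA.eigenvalues i ^ 2 = (A * A).trace := by
  set U : Matrix n n ℝ := (hA.eigenvectorUnitary : Matrix n n ℝ)
  set D : Matrix n n ℝ := diagonal ((RCLike.ofReal : ℝ → ℝ) ∘ hA.eigenvalues)
  have hU : star U * U = 1 := mem_unitaryGroup_iff'.mp hA.eigenvectorUnitary.2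
  have hA' : A = U * D * star U := by
    conv_lhs => rw [hA.spectral_theorem, Unitary.conjStarAlgAut_apply]
  calc ∑ i, hA.eigenvalues i ^ 2 = (D * D).trace := by
        simp [D, diagonal_mul_diagonal, trace_diagonal, sq]
    _ = (U * D * (star U * U) * D * star U).trace := by
        rw [hU, Matrix.mul_one, trace_mul_comm (U * D * D)]
        simp only [← Matrix.mul_assoc, hU, Matrix.one_mul]
    _ = (A * A).trace := by simp only [hA', Matrix.mul_assoc]

end Matrix.IsHermitian

theorem sum_abs_le_add_sqrt {ι : Type*} [Fintype ι] [DecidableEq ι] (f : ι → ℝ) {i j : ι}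
    (hij : i ≠ j) :
    ∑ l, |f l| ≤ |f i| + |f j| +
      √((Fintype.card ι - 2) * (∑ l, f l ^ 2 - f i ^ 2 - f j ^ 2)) := by
  set s : Finset ι := univ \ {i, j}
  have hsplit (g : ι → ℝ) : ∑ l, g l = g i + g j + ∑ l ∈ s, g l := by
    rw [← Finset.sum_sdiff (subset_univ {i, j}), Finset.sum_pair hij, add_comm]
  have hcard : (#s : ℝ) = Fintype.card ι - 2 := by
    rw [Finset.card_sdiff_of_subset (subset_univ _), Finset.card_univ, Finset.card_pair hij,
      Nat.cast_sub (by simpa [Finset.card_pair hij] using card_le_univ {i, j})]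
    norm_num
  have hcs : ∑ l ∈ s, |f l| ≤ √(#s * ∑ l ∈ s, f l ^ 2) := by
    refine Real.le_sqrt_of_sq_le ?_
    simpa only [sq_abs] using sq_sum_le_card_mul_sum_sq (s := s) (f := fun l => |f l|)
  rw [hsplit, hsplit (fun l => f l ^ 2), ← hcard,
    show f i ^ 2 + f j ^ 2 + ∑ l ∈ s, f l ^ 2 - f i ^ 2 - f j ^ 2 = ∑ l ∈ s, f l ^ 2 by ring]
  exact add_le_add_right hcs _

namespace SimpleGraph

variable {V : Type*} [Fintype V] [DecidableEq V] {G : SimpleGraph V} [DecidableRel G.Adj] {k : ℕ}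

theorem adjEigs_eq_eigenvalues : adjEigs G = (adjMatrix_isHermitian G).eigenvalues := by
  unfold adjEigs
  congr!

def Coloring.sign (c : G.Coloring (Fin 2)) (v : V) : ℝ := if c v = 0 then 1 else -1

theorem Coloring.sign_ne_zero (c : G.Coloring (Fin 2)) (v : V) : c.sign v ≠ 0 := by
  unfold Coloring.sign; split_ifs <;> norm_num

theorem Coloring.sign_eq_neg_of_adj (c : G.Coloring (Fin 2)) {u v : V} (h : G.Adj u v) :
    c.sign v = -c.sign u := by
  have key (a b : Fin 2) (hab : a ≠ b) :
      (if b = 0 then (1 : ℝ) else -1) = -(if a = 0 then 1 else -1) := by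
    fin_cases a <;> fin_cases b <;> simp_all
  exact key _ _ (c.valid h)

theorem IsRegularOfDegree.adjMatrix_mulVec_sign (hreg : G.IsRegularOfDegree k)
    (c : G.Coloring (Fin 2)) : G.adjMatrix ℝ *ᵥ c.sign = (-k : ℝ) • c.sign := by
  funext v
  rw [adjMatrix_mulVec_apply, Finset.sum_congr rfl fun u hu =>
    c.sign_eq_neg_of_adj ((mem_neighborFinset _ _ _).mp hu), Finset.sum_const,
    card_neighborFinset_eq_degree, hreg v]
  simp

theorem IsRegularOfDegree.trace_adjMatrix_mul_self (hreg : G.IsRegularOfDegree k) :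
    (G.adjMatrix ℝ * G.adjMatrix ℝ).trace = Fintype.card V * k := by
  simp only [trace, diag_apply, adjMatrix_mul_self_apply_self, hreg _,
    Finset.sum_const, Finset.card_univ, nsmul_eq_mul]

theorem IsRegularOfDegree.exists_adjEigs_eq [Nonempty V] (hreg : G.IsRegularOfDegree k) :
    ∃ i, adjEigs G i = k := by
  rw [adjEigs_eq_eigenvalues]
  refine (adjMatrix_isHermitian G).exists_eigenvalues_eq one_ne_zero ?_
  funext v
  simpa using hreg v

theorem IsRegularOfDegree.exists_adjEigs_eq_neg [Nonempty V] (hreg : G.IsRegularOfDegree k)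
    (hbip : G.Colorable 2) : ∃ i, adjEigs G i = -k := by
  obtain ⟨c⟩ := hbip
  rw [adjEigs_eq_eigenvalues]
  exact (adjMatrix_isHermitian G).exists_eigenvalues_eq
    (Function.ne_iff.mpr ⟨Classical.arbitrary V, c.sign_ne_zero _⟩) (hreg.adjMatrix_mulVec_sign c)

theorem IsRegularOfDegree.sum_adjEigs_sq (hreg : G.IsRegularOfDegree k) :
    ∑ i, adjEigs G i ^ 2 = Fintype.card V * k := by
  rw [adjEigs_eq_eigenvalues, Matrix.IsHermitian.sum_sq_eigenvalues,
    hreg.trace_adjMatrix_mul_self]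

end SimpleGraph

/-- For a connected k-regular bipartite graph on 2m vertices,
the energy per vertex is at most k/m + (1/m)√((m−1)(m−k)k). -/
theorem epv_le_of_connected_bipartite_regular {V : Type*} [Fintype V] [DecidableEq V]
    (G : SimpleGraph V) [DecidableRel G.Adj] (k m : ℕ) (hk : 2 ≤ k)
    (hconn : G.Connected) (hbip : G.Colorable 2)
    (hreg : G.IsRegularOfDegree k) (hcard : Fintype.card V = 2 * m) :
    epv G ≤ (k : ℝ) / m +
      (1 / (m : ℝ)) * Real.sqrt (((m : ℝ) - 1) * ((m : ℝ) - k) * k) := by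
  have := hconn.nonempty
  obtain ⟨i, hi⟩ := hreg.exists_adjEigs_eq
  obtain ⟨j, hj⟩ := hreg.exists_adjEigs_eq_neg hbip
  have hk0 : (0 : ℝ) < k := by exact_mod_cast (by omega : 0 < k)
  have hij : i ≠ j := by rintro rfl; linarith
  have hm : (0 : ℝ) < m := by
    have := Fintype.card_pos (α := V); norm_cast; omega
  have hbound := sum_abs_le_add_sqrt (adjEigs G) hij
  rw [hi, hj, hreg.sum_adjEigs_sq, hcard, abs_neg, abs_of_pos hk0] at hbound
  rw [epv, hcard, Nat.cast_mul, Nat.cast_ofNat, div_le_iff₀ (by positivity)]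
  calc ∑ l, |adjEigs G l| ≤ 2 * k + √(2 ^ 2 * (((m : ℝ) - 1) * ((m : ℝ) - k) * k)) := by
        convert hbound using 3 <;> push_cast <;> ring
    _ = _ := by
        rw [Real.sqrt_mul (by norm_num), Real.sqrt_sq (by norm_num)]
        field_simp
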